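/- The function I_{b3} = (x p_y − y p_x) p_y − k_1 x y^2 + 2 k_2 x / y^2 − (k_3/2) y^2 Poisson-commutes with the Hamiltonian H_b = (1/2)(p_x^2+p_y^2) + (1/2)k_1(4x^2 + y^2) + k_2/y^2 + k_3 x on the set where y ≠ 0. -/

import Mathlib

/-- Canonical Poisson bracket on phase space ℝ² × ℝ² with coordinates (x,y,pₓ,p_y). -/
noncomputable def pb (F G : ℝ → ℝ → ℝ → ℝ → ℝ) (x y px py : ℝ) : ℝ :=
    deriv (fun t => F t y px py) x * deriv (fun t => G x y t py) px
  + deriv (fun t => F x t px py) y * deriv (fun t => G x y px t) py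
  - deriv (fun t => F x y t py) px * deriv (fun t => G t y px py) x
  - deriv (fun t => F x y px t) py * deriv (fun t => G x t px py) y

/-! All eight partial derivatives of `H_b` and `I_{b3}` are elementary: in each of `x`, `p_x`, `p_y`
both functions are polynomials of degree at most two, and in `y` they have the form
`a y² + b y + c + d / y²`. Substituting them into the bracket gives a rational function of `y`
that vanishes identically once the denominator `y³` is cleared. -/

theorem pb_eq_of_hasDerivAt {F G : ℝ → ℝ → ℝ → ℝ → ℝ}
    {x y px py Fx Fy Fpx Fpy Gx Gy Gpx Gpy : ℝ}
    (hFx : HasDerivAt (fun t => F t y px py) Fx x)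
    (hFy : HasDerivAt (fun t => F x t px py) Fy y)
    (hFpx : HasDerivAt (fun t => F x y t py) Fpx px)
    (hFpy : HasDerivAt (fun t => F x y px t) Fpy py)
    (hGx : HasDerivAt (fun t => G t y px py) Gx x)
    (hGy : HasDerivAt (fun t => G x t px py) Gy y)
    (hGpx : HasDerivAt (fun t => G x y t py) Gpx px)
    (hGpy : HasDerivAt (fun t => G x y px t) Gpy py) :
    pb F G x y px py = Fx * Gpx + Fy * Gpy - Fpx * Gx - Fpy * Gy := by
  simp only [pb, hFx.deriv, hFy.deriv, hFpx.deriv, hFpy.deriv,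
    hGx.deriv, hGy.deriv, hGpx.deriv, hGpy.deriv]

theorem hasDerivAt_of_eq_quadratic {f : ℝ → ℝ} {a b c : ℝ} (x : ℝ)
    (hf : ∀ t, f t = a * t ^ 2 + b * t + c) :
    HasDerivAt f (2 * a * x + b) x := by
  rw [funext hf]
  have := (((hasDerivAt_pow 2 x).const_mul a).add ((hasDerivAt_id x).const_mul b)).add_const c
  exact this.congr_deriv (by ring)

theorem hasDerivAt_of_eq_quadratic_add_div_sq {f : ℝ → ℝ} {a b c d x : ℝ} (hx : x ≠ 0)
    (hf : ∀ t, f t = a * t ^ 2 + b * t + c + d / t ^ 2) :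
    HasDerivAt f (2 * a * x + b - 2 * d / x ^ 3) x := by
  rw [funext hf]
  have hquad := hasDerivAt_of_eq_quadratic (a := a) (b := b) (c := c) x fun _ => rfl
  have hinv := (hasDerivAt_const x d).div (hasDerivAt_pow 2 x) (pow_ne_zero 2 hx)
  exact (hquad.add hinv).congr_deriv (by field_simp; ring)

noncomputable def hamiltonianB (k1 k2 k3 : ℝ) (x y px py : ℝ) : ℝ :=
  (1/2)*(px^2 + py^2) + (1/2)*k1*(4*x^2 + y^2) + k2/y^2 + k3*x

noncomputable def integralB3 (k1 k2 k3 : ℝ) (x y px py : ℝ) : ℝ :=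
  (x*py - y*px)*py - k1*x*y^2 + 2*k2*x/y^2 - (k3/2)*y^2

section PartialDerivatives

variable (k1 k2 k3 x y px py : ℝ)

theorem hasDerivAt_hamiltonianB_x :
    HasDerivAt (fun t => hamiltonianB k1 k2 k3 t y px py) (4*k1*x + k3) x :=
  (hasDerivAt_of_eq_quadratic (a := 2*k1) (b := k3)
    (c := (1/2)*(px^2 + py^2) + (1/2)*k1*y^2 + k2/y^2) x
    fun t => by unfold hamiltonianB; ring).congr_deriv (by ring)

theorem hasDerivAt_hamiltonianB_y (hy : y ≠ 0) :
    HasDerivAt (fun t => hamiltonianB k1 k2 k3 x t px py) (k1*y - 2*k2/y^3) y :=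
  (hasDerivAt_of_eq_quadratic_add_div_sq (a := k1/2) (b := 0)
    (c := (1/2)*(px^2 + py^2) + 2*k1*x^2 + k3*x) (d := k2) hy
    fun t => by unfold hamiltonianB; ring).congr_deriv (by ring)

theorem hasDerivAt_hamiltonianB_px :
    HasDerivAt (fun t => hamiltonianB k1 k2 k3 x y t py) px px :=
  (hasDerivAt_of_eq_quadratic (a := 1/2) (b := 0)
    (c := (1/2)*py^2 + (1/2)*k1*(4*x^2 + y^2) + k2/y^2 + k3*x) px
    fun t => by unfold hamiltonianB; ring).congr_deriv (by ring)

theorem hasDerivAt_hamiltonianB_py :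
    HasDerivAt (fun t => hamiltonianB k1 k2 k3 x y px t) py py :=
  (hasDerivAt_of_eq_quadratic (a := 1/2) (b := 0)
    (c := (1/2)*px^2 + (1/2)*k1*(4*x^2 + y^2) + k2/y^2 + k3*x) py
    fun t => by unfold hamiltonianB; ring).congr_deriv (by ring)

theorem hasDerivAt_integralB3_x :
    HasDerivAt (fun t => integralB3 k1 k2 k3 t y px py) (py^2 - k1*y^2 + 2*k2/y^2) x :=
  (hasDerivAt_of_eq_quadratic (a := 0) (b := py^2 - k1*y^2 + 2*k2/y^2)
    (c := -y*px*py - (k3/2)*y^2) x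
    fun t => by unfold integralB3; ring).congr_deriv (by ring)

theorem hasDerivAt_integralB3_y (hy : y ≠ 0) :
    HasDerivAt (fun t => integralB3 k1 k2 k3 x t px py)
      (-px*py - 2*k1*x*y - k3*y - 4*k2*x/y^3) y :=
  (hasDerivAt_of_eq_quadratic_add_div_sq (a := -(k1*x + k3/2)) (b := -px*py)
    (c := x*py^2) (d := 2*k2*x) hy
    fun t => by unfold integralB3; ring).congr_deriv (by ring)

theorem hasDerivAt_integralB3_px :
    HasDerivAt (fun t => integralB3 k1 k2 k3 x y t py) (-y*py) px :=
  (hasDerivAt_of_eq_quadratic (a := 0) (b := -y*py)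
    (c := x*py^2 - k1*x*y^2 + 2*k2*x/y^2 - (k3/2)*y^2) px
    fun t => by unfold integralB3; ring).congr_deriv (by ring)

theorem hasDerivAt_integralB3_py :
    HasDerivAt (fun t => integralB3 k1 k2 k3 x y px t) (2*x*py - y*px) py :=
  (hasDerivAt_of_eq_quadratic (a := x) (b := -y*px)
    (c := -k1*x*y^2 + 2*k2*x/y^2 - (k3/2)*y^2) py
    fun t => by unfold integralB3; ring).congr_deriv (by ring)

end PartialDerivatives

theorem stmt_4 (k1 k2 k3 : ℝ) (x y px py : ℝ) (hy : y ≠ 0) :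
    pb (fun x y px py =>
          (1/2)*(px^2 + py^2) + (1/2)*k1*(4*x^2 + y^2) + k2/y^2 + k3*x)
       (fun x y px py =>
          (x*py - y*px)*py - k1*x*y^2 + 2*k2*x/y^2 - (k3/2)*y^2)
       x y px py = 0 := by
  change pb (hamiltonianB k1 k2 k3) (integralB3 k1 k2 k3) x y px py = 0
  rw [pb_eq_of_hasDerivAt
    (hasDerivAt_hamiltonianB_x ..) (hasDerivAt_hamiltonianB_y (hy := hy) ..)
    (hasDerivAt_hamiltonianB_px ..) (hasDerivAt_hamiltonianB_py ..)
    (hasDerivAt_integralB3_x ..) (hasDerivAt_integralB3_y (hy := hy) ..)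
    (hasDerivAt_integralB3_px ..) (hasDerivAt_integralB3_py ..)]
  field_simp
  ring
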